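/- Let $a \in \mathbb{R}^n$ with $\|a\|_2 = 1$ be sorted in decreasing order and suppose $a_p \ge a_{p+1} + \xi$ for some $1 \le p < n$ and $\xi > 0$. Then for any two permutations $\pi, \rho$ of $[n]$ such that the binary indicator vectors $v_\pi, v_\rho$ (where $(v_\pi)_i = 1$ iff $\pi^{-1}(i) \le p$) satisfy $d_H(v_\pi, v_\rho) \ge h$, the permuted vectors satisfy $\|\Pi_\pi a - \Pi_\rho a\|_2 \ge \sqrt{h/2}\cdot\xi$, where $\Pi_\pi$ denotes the permutation matrix of $\pi$. -/
import Mathlib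


/-- Separation of permuted copies of a sorted vector with a gap, in terms of the Hamming
distance between the indicator vectors of top-p positions. -/
theorem stmt19 {n : ℕ} (a : Fin n → ℝ) (ha2 : ∑ i, (a i) ^ 2 = 1)
    (hsort : Antitone a) (p : ℕ) (hp1 : 1 ≤ p) (hpn : p < n)
    (ξ : ℝ) (hξ : 0 < ξ)
    (hsep : a ⟨p, hpn⟩ + ξ ≤ a ⟨p - 1, by omega⟩)
    (π ρ : Equiv.Perm (Fin n)) (h : ℕ)
    (hH : h ≤ hammingDist (fun i => decide ((π.symm i : ℕ) < p))
        (fun i => decide ((ρ.symm i : ℕ) < p))) :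
    Real.sqrt ((h : ℝ) / 2) * ξ
      ≤ Real.sqrt (∑ i, (a (π.symm i) - a (ρ.symm i)) ^ 2) := by
  have key : ∀ j k : Fin n, (j : ℕ) < p → ¬ ((k : ℕ) < p) → ξ ≤ a j - a k := by
    intro j k hj hk
    have h1 : a ⟨p - 1, by omega⟩ ≤ a j := hsort (by simp [Fin.le_def]; omega)
    have h2 : a k ≤ a ⟨p, hpn⟩ := hsort (by simp [Fin.le_def]; omega)
    linarith
  set S := Finset.univ.filter (fun i : Fin n =>
      (fun i => decide ((π.symm i : ℕ) < p)) i ≠ (fun i => decide ((ρ.symm i : ℕ) < p)) i)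
    with hS
  have hsq : ∀ i ∈ S, ξ ^ 2 ≤ (a (π.symm i) - a (ρ.symm i)) ^ 2 := by
    intro i hi
    rw [hS, Finset.mem_filter] at hi
    have hi' := hi.2
    simp only [ne_eq, decide_eq_decide] at hi'
    rcases lt_or_ge ((π.symm i : ℕ)) p with h1 | h1
    · have h2 : ¬ ((ρ.symm i : ℕ) < p) := fun h2 => hi' ⟨fun _ => h2, fun _ => h1⟩
      have := key _ _ h1 h2
      nlinarith
    · have h2 : ((ρ.symm i : ℕ) < p) := by
        by_contra h2
        exact hi' ⟨fun hh => absurd hh (not_lt.mpr h1), fun hh => absurd hh h2⟩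
      have := key _ _ h2 (not_lt.mpr h1)
      nlinarith
  have hcard : (h : ℝ) ≤ S.card := by
    exact_mod_cast hH
  have hsum : (h : ℝ) * ξ ^ 2 ≤ ∑ i, (a (π.symm i) - a (ρ.symm i)) ^ 2 := by
    calc (h : ℝ) * ξ ^ 2 ≤ (S.card : ℝ) * ξ ^ 2 := by
            apply mul_le_mul_of_nonneg_right hcard (sq_nonneg _)
      _ = ∑ _i ∈ S, ξ ^ 2 := by rw [Finset.sum_const, nsmul_eq_mul]
      _ ≤ ∑ i ∈ S, (a (π.symm i) - a (ρ.symm i)) ^ 2 := Finset.sum_le_sum hsq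
      _ ≤ ∑ i, (a (π.symm i) - a (ρ.symm i)) ^ 2 :=
          Finset.sum_le_sum_of_subset_of_nonneg (Finset.filter_subset _ _)
            (fun i _ _ => sq_nonneg _)
  have heq : Real.sqrt ((h : ℝ) / 2) * ξ = Real.sqrt ((h : ℝ) / 2 * ξ ^ 2) := by
    rw [Real.sqrt_mul (by positivity), Real.sqrt_sq hξ.le]
  rw [heq]
  apply Real.sqrt_le_sqrt
  nlinarith [sq_nonneg ξ]
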